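/- arXiv:1707.01931 — 4 statements merged into one kernel-verified Lean document; each statement's English description precedes it below -/
import Mathlib

section
/- For every n ≥ 0, the number e_n of Dyck paths with catastrophes of length n equals the number h_n of 1-horizontal Dyck paths of length n. -/
/-- Validity of a path with catastrophes over the jump set `J`, starting from
altitude `h`: each step is either a jump `s ∈ J` keeping the altitude
nonnegative, or a catastrophe `s = -h` from an altitude `h > 0` with `-h ∉ J`
(landing at altitude `0`). -/
def CatValidFrom (J : Finset ℤ) : ℤ → List ℤ → Prop
  | _, [] => True
  | h, s :: r =>
    ((s ∈ J ∧ 0 ≤ h + s) ∨ (s = -h ∧ 0 < h ∧ -h ∉ J)) ∧ CatValidFrom J (h + s) r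

/-- The jump set of Dyck paths. For this jump set a catastrophe is a jump
`-h` from an altitude `h ≥ 2` to altitude `0`. -/
def dyckJ : Finset ℤ := {-1, 1}

/-- `l` is a Dyck path with catastrophes of length `n`: `n` steps, starting at
altitude `0`, never going below `0`, ending at altitude `0`, where each step is
`+1`, or `-1` (only from altitude `≥ 1`), or a catastrophe from altitude `≥ 2`
down to `0`. -/
def DyckCat (n : ℕ) (l : List ℤ) : Prop :=
  l.length = n ∧ CatValidFrom dyckJ 0 l ∧ l.sum = 0

/-- The number `e n` of Dyck paths with catastrophes of length `n`. -/
noncomputable def eCount (n : ℕ) : ℕ := Nat.card {l : List ℤ // DyckCat n l}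

/-- Validity of a 1-horizontal Dyck path starting from altitude `h`: steps are
`+1`, `-1` (only from altitude `≥ 1`), and a horizontal step `0` allowed
exactly at altitude `1`. -/
def HValidFrom : ℤ → List ℤ → Prop
  | _, [] => True
  | h, s :: r =>
    (s = 1 ∨ (s = -1 ∧ 1 ≤ h) ∨ (s = 0 ∧ h = 1)) ∧ HValidFrom (h + s) r

/-- `l` is a 1-horizontal Dyck path of length `n`. -/
def HDyck (n : ℕ) (l : List ℤ) : Prop :=
  l.length = n ∧ HValidFrom 0 l ∧ l.sum = 0

/-- The number `h n` of 1-horizontal Dyck paths of length `n`. -/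
noncomputable def hCount (n : ℕ) : ℕ := Nat.card {l : List ℤ // HDyck n l}

def listsE : ℕ → ℤ → Finset (List ℤ)
  | 0, h => if h = 0 then {([] : List ℤ)} else ∅
  | n+1, h =>
      (if -1 ≤ h then (listsE n (h+1)).image (fun l => (1:ℤ) :: l) else ∅) ∪
      (if 1 ≤ h then (listsE n (h-1)).image (fun l => (-1:ℤ) :: l) else ∅) ∪
      (if 2 ≤ h then (listsE n 0).image (fun l => (-h) :: l) else ∅)

def listsH : ℕ → ℤ → Finset (List ℤ)
  | 0, h => if h = 0 then {([] : List ℤ)} else ∅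
  | n+1, h =>
      ((listsH n (h+1)).image (fun l => (1:ℤ) :: l)) ∪
      (if 1 ≤ h then (listsH n (h-1)).image (fun l => (-1:ℤ) :: l) else ∅) ∪
      (if h = 1 then (listsH n 1).image (fun l => (0:ℤ) :: l) else ∅)

lemma mem_listsE : ∀ (n : ℕ) (h : ℤ) (l : List ℤ),
    l ∈ listsE n h ↔ (l.length = n ∧ CatValidFrom dyckJ h l ∧ h + l.sum = 0) := by
  intro n
  induction n with
  | zero =>
    intro h l
    rw [listsE]
    split_ifs with h0
    · subst h0; cases l <;> simp [CatValidFrom]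
    · cases l <;> simp [CatValidFrom, h0]
  | succ n ih =>
    intro h l
    cases l with
    | nil => rw [listsE]; split_ifs <;> simp
    | cons s t =>
      rw [listsE]
      have hm1 : h + (-1) = h - 1 := by ring
      simp only [Finset.mem_union, Finset.mem_image, ih, CatValidFrom, dyckJ,
        Finset.mem_insert, Finset.mem_singleton, List.length_cons, List.sum_cons,
        add_left_inj, List.cons.injEq]
      constructor
      · rintro ((hA | hB) | hC)
        · split_ifs at hA with hm
          · simp only [Finset.mem_image, ih] at hA
            obtain ⟨a, ⟨hlen, hval, hsum⟩, rfl, rfl⟩ := hA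
            exact ⟨hlen, ⟨Or.inl ⟨Or.inr rfl, by omega⟩, hval⟩, by omega⟩
          · simp at hA
        · split_ifs at hB with h1
          · simp only [Finset.mem_image, ih] at hB
            obtain ⟨a, ⟨hlen, hval, hsum⟩, rfl, rfl⟩ := hB
            rw [hm1] at *
            exact ⟨hlen, ⟨Or.inl ⟨Or.inl rfl, by omega⟩, by rwa [hm1]⟩, by omega⟩
          · simp at hB
        · split_ifs at hC with h2
          · simp only [Finset.mem_image, ih] at hC
            obtain ⟨a, ⟨hlen, hval, hsum⟩, rfl, rfl⟩ := hC
            refine ⟨hlen, ⟨Or.inr ⟨rfl, by omega, ?_⟩, ?_⟩, by omega⟩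
            · rintro (e | e) <;> omega
            · have : h + -h = 0 := by ring
              rwa [this]
          · simp at hC
      · rintro ⟨hlen, ⟨hstep, hval⟩, hsum⟩
        rcases hstep with ⟨(rfl | rfl), hge⟩ | ⟨rfl, hpos, hnot⟩
        · -- s = -1
          have h1 : (1:ℤ) ≤ h := by omega
          refine Or.inl (Or.inr ?_)
          rw [if_pos h1]
          simp only [Finset.mem_image, ih]
          exact ⟨t, ⟨hlen, by rwa [hm1] at hval, by omega⟩, rfl⟩
        · refine Or.inl (Or.inl ?_)
          rw [if_pos (by omega : (-1:ℤ) ≤ h)]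
          simp only [Finset.mem_image, ih]
          exact ⟨t, ⟨hlen, hval, by omega⟩, rfl⟩
        · -- catastrophe
          have h2 : (2:ℤ) ≤ h := by
            by_contra hc
            have : h = 1 := by omega
            exact hnot (by simp [this])
          refine Or.inr ?_
          rw [if_pos h2]
          simp only [Finset.mem_image, ih]
          have hz : h + -h = 0 := by ring
          exact ⟨t, ⟨hlen, by rwa [hz] at hval, by omega⟩, rfl⟩

lemma mem_listsH : ∀ (n : ℕ) (h : ℤ) (l : List ℤ),
    l ∈ listsH n h ↔ (l.length = n ∧ HValidFrom h l ∧ h + l.sum = 0) := by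
  intro n
  induction n with
  | zero =>
    intro h l
    rw [listsH]
    split_ifs with h0
    · subst h0; cases l <;> simp [HValidFrom]
    · cases l <;> simp [HValidFrom, h0]
  | succ n ih =>
    intro h l
    cases l with
    | nil => rw [listsH]; split_ifs <;> simp
    | cons s t =>
      rw [listsH]
      have hm1 : h + (-1) = h - 1 := by ring
      simp only [Finset.mem_union, Finset.mem_image, ih, HValidFrom,
        List.length_cons, List.sum_cons, add_left_inj, List.cons.injEq]
      constructor
      · rintro ((hA | hB) | hC)
        · obtain ⟨a, ⟨hlen, hval, hsum⟩, rfl, rfl⟩ := hA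
          exact ⟨hlen, ⟨Or.inl rfl, hval⟩, by omega⟩
        · split_ifs at hB with h1
          · simp only [Finset.mem_image, ih] at hB
            obtain ⟨a, ⟨hlen, hval, hsum⟩, rfl, rfl⟩ := hB
            exact ⟨hlen, ⟨Or.inr (Or.inl ⟨rfl, h1⟩), by rwa [hm1]⟩, by omega⟩
          · simp at hB
        · split_ifs at hC with h2
          · simp only [Finset.mem_image, ih] at hC
            obtain ⟨a, ⟨hlen, hval, hsum⟩, rfl, rfl⟩ := hC
            subst h2
            exact ⟨hlen, ⟨Or.inr (Or.inr ⟨rfl, rfl⟩), by rwa [add_zero]⟩, by omega⟩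
          · simp at hC
      · rintro ⟨hlen, ⟨(rfl | ⟨rfl, h1⟩ | ⟨rfl, rfl⟩), hval⟩, hsum⟩
        · exact Or.inl (Or.inl ⟨t, ⟨hlen, hval, by omega⟩, rfl, rfl⟩)
        · refine Or.inl (Or.inr ?_)
          rw [if_pos h1]
          simp only [Finset.mem_image, ih]
          exact ⟨t, ⟨hlen, by rwa [hm1] at hval, by omega⟩, rfl⟩
        · refine Or.inr ?_
          rw [if_pos rfl]
          simp only [Finset.mem_image, ih]
          exact ⟨t, ⟨hlen, by rwa [add_zero] at hval, by omega⟩, rfl⟩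

lemma cons_image_disj {a b : ℤ} (hab : a ≠ b) (s t : Finset (List ℤ)) :
    Disjoint (s.image (fun l => a :: l)) (t.image (fun l => b :: l)) := by
  rw [Finset.disjoint_left]
  rintro l hl hl'
  simp only [Finset.mem_image] at hl hl'
  obtain ⟨u, -, rfl⟩ := hl
  obtain ⟨v, -, he⟩ := hl'
  injection he with h1 _
  exact hab h1.symm

lemma card_cons_image (a : ℤ) (s : Finset (List ℤ)) :
    (s.image (fun l => a :: l)).card = s.card :=
  Finset.card_image_of_injective _ (fun x y hxy => by injection hxy)

/-- `ℕ`-indexed count of Dyck-with-catastrophe suffixes. -/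
def Ecnt (n m : ℕ) : ℕ := (listsE n (m:ℤ)).card

/-- `ℕ`-indexed count of 1-horizontal suffixes. -/
def Hcnt (n m : ℕ) : ℕ := (listsH n (m:ℤ)).card

lemma Ecnt_succ (n m : ℕ) :
    Ecnt (n+1) m = Ecnt n (m+1) + (if 1 ≤ m then Ecnt n (m-1) else 0)
      + (if 2 ≤ m then Ecnt n 0 else 0) := by
  unfold Ecnt
  rw [listsE, if_pos (by omega : (-1:ℤ) ≤ (m:ℤ))]
  have c1 : ((m:ℤ)+1) = ((m+1:ℕ):ℤ) := by push_cast; ring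
  by_cases h2 : 2 ≤ m
  · have h1 : 1 ≤ m := by omega
    have c2 : ((m:ℤ)-1) = ((m-1:ℕ):ℤ) := by push_cast [h1]; ring
    rw [if_pos (by exact_mod_cast h1 : (1:ℤ) ≤ (m:ℤ)),
      if_pos (by exact_mod_cast h2 : (2:ℤ) ≤ (m:ℤ)), if_pos h1, if_pos h2,
      Finset.card_union_of_disjoint (Finset.disjoint_union_left.mpr
        ⟨cons_image_disj (by omega) _ _, cons_image_disj (by omega) _ _⟩),
      Finset.card_union_of_disjoint (cons_image_disj (by omega) _ _),
      card_cons_image, card_cons_image, card_cons_image, c1, c2]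
    norm_num
  · rw [if_neg (by exact_mod_cast h2 : ¬(2:ℤ) ≤ (m:ℤ)), if_neg h2,
      Finset.union_empty]
    by_cases h1 : 1 ≤ m
    · have c2 : ((m:ℤ)-1) = ((m-1:ℕ):ℤ) := by push_cast [h1]; ring
      rw [if_pos (by exact_mod_cast h1 : (1:ℤ) ≤ (m:ℤ)), if_pos h1,
        Finset.card_union_of_disjoint (cons_image_disj (by omega) _ _),
        card_cons_image, card_cons_image, c1, c2]
      omega
    · rw [if_neg (by exact_mod_cast h1 : ¬(1:ℤ) ≤ (m:ℤ)), if_neg h1,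
        Finset.union_empty, card_cons_image, c1]
      omega

lemma Hcnt_succ (n m : ℕ) :
    Hcnt (n+1) m = Hcnt n (m+1) + (if 1 ≤ m then Hcnt n (m-1) else 0)
      + (if m = 1 then Hcnt n 1 else 0) := by
  unfold Hcnt
  rw [listsH]
  have c1 : ((m:ℤ)+1) = ((m+1:ℕ):ℤ) := by push_cast; ring
  by_cases hm : m = 1
  · subst hm
    rw [if_pos (by norm_num : (1:ℤ) ≤ ((1:ℕ):ℤ)),
      if_pos (by norm_num : ((1:ℕ):ℤ) = 1), if_pos (le_refl 1), if_pos rfl,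
      Finset.card_union_of_disjoint (Finset.disjoint_union_left.mpr
        ⟨cons_image_disj (by omega) _ _, cons_image_disj (by omega) _ _⟩),
      Finset.card_union_of_disjoint (cons_image_disj (by omega) _ _),
      card_cons_image, card_cons_image, card_cons_image, c1]
    norm_num
  · rw [if_neg (by exact_mod_cast hm : ¬((m:ℕ):ℤ) = 1), if_neg hm,
      Finset.union_empty]
    by_cases h1 : 1 ≤ m
    · have c2 : ((m:ℤ)-1) = ((m-1:ℕ):ℤ) := by push_cast [h1]; ring
      rw [if_pos (by exact_mod_cast h1 : (1:ℤ) ≤ (m:ℤ)), if_pos h1,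
        Finset.card_union_of_disjoint (cons_image_disj (by omega) _ _),
        card_cons_image, card_cons_image, c1, c2]
      omega
    · rw [if_neg (by exact_mod_cast h1 : ¬(1:ℤ) ≤ (m:ℤ)), if_neg h1,
        Finset.union_empty, card_cons_image, c1]
      omega

lemma key : ∀ n : ℕ, (Ecnt n 0 = Hcnt n 0) ∧
    ∀ g : ℕ, Ecnt n (g+1) = ∑ k ∈ Finset.range (g+1), Hcnt n (k+1) := by
  intro n
  induction n with
  | zero =>
    constructor
    · rfl
    · intro g
      have hl : Ecnt 0 (g+1) = 0 := by
        unfold Ecnt; rw [listsE, if_neg (by omega : ¬((g+1:ℕ):ℤ) = 0)]; rfl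
      have hr : ∀ k ∈ Finset.range (g+1), Hcnt 0 (k+1) = 0 := by
        intro k _
        unfold Hcnt; rw [listsH, if_neg (by omega : ¬((k+1:ℕ):ℤ) = 0)]; rfl
      rw [hl, Finset.sum_congr rfl hr, Finset.sum_const, smul_zero]
  | succ n ih =>
    obtain ⟨ih0, ihs⟩ := ih
    constructor
    · rw [Ecnt_succ, Hcnt_succ]
      norm_num
      have h0 := ihs 0
      rw [Finset.sum_range_one] at h0
      norm_num at h0 ⊢
      omega
    · intro g
      cases g with
      | zero =>
        rw [Finset.sum_range_one, Ecnt_succ, Hcnt_succ]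
        norm_num
        have h1 := ihs 1
        rw [Finset.sum_range_succ, Finset.sum_range_one] at h1
        norm_num at h1
        omega
      | succ g =>
        have lhs : Ecnt (n+1) (g+2) = Ecnt n (g+3) + Ecnt n (g+1) + Ecnt n 0 := by
          rw [Ecnt_succ, if_pos (by omega), if_pos (by omega)]
          norm_num
        have rhs : ∀ k ∈ Finset.range (g+2), Hcnt (n+1) (k+1)
            = Hcnt n (k+2) + Hcnt n k + (if k = 0 then Hcnt n 1 else 0) := by
          intro k _
          rw [Hcnt_succ, if_pos (by omega), show k+1-1 = k by omega,
            show k+1+1 = k+2 by omega]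
          congr 1
          by_cases hk : k = 0
          · subst hk; rw [if_pos rfl, if_pos rfl]
          · rw [if_neg (by omega : ¬k+1 = 1), if_neg hk]
        rw [lhs, Finset.sum_congr rfl rhs, Finset.sum_add_distrib,
          Finset.sum_add_distrib]
        have s3 : (∑ k ∈ Finset.range (g+2), if k = 0 then Hcnt n 1 else 0)
            = Hcnt n 1 := by
          rw [Finset.sum_ite_eq' (Finset.range (g+2)) 0 (fun _ => Hcnt n 1)]
          simp
        have s1 : ∑ k ∈ Finset.range (g+3), Hcnt n (k+1)
            = (∑ k ∈ Finset.range (g+2), Hcnt n (k+2)) + Hcnt n 1 := by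
          have h := Finset.sum_range_succ' (fun k => Hcnt n (k+1)) (g+2)
          rw [show g+2+1 = g+3 by omega] at h
          exact h
        have s2 : ∑ k ∈ Finset.range (g+2), Hcnt n k
            = (∑ k ∈ Finset.range (g+1), Hcnt n (k+1)) + Hcnt n 0 := by
          exact Finset.sum_range_succ' (fun k => Hcnt n k) (g+1)
        rw [ihs (g+2), ihs g, ih0, s3, s1, s2]
        omega

/-- **Bijection for Dyck paths with catastrophes.**
The number of Dyck paths with catastrophes of length `n` equals the number of
1-horizontal Dyck paths of length `n`. -/
theorem dyckCat_eq_hDyck (n : ℕ) : eCount n = hCount n := by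
  have he : ∀ l, DyckCat n l ↔ l ∈ listsE n 0 := by
    intro l; rw [mem_listsE]; unfold DyckCat; rw [zero_add]
  have hh : ∀ l, HDyck n l ↔ l ∈ listsH n 0 := by
    intro l; rw [mem_listsH]; unfold HDyck; rw [zero_add]
  have e1 : eCount n = (listsE n 0).card := by
    unfold eCount
    rw [Nat.card_congr (Equiv.subtypeEquivRight he)]
    exact Nat.card_eq_finsetCard _
  have h1 : hCount n = (listsH n 0).card := by
    unfold hCount
    rw [Nat.card_congr (Equiv.subtypeEquivRight hh)]
    exact Nat.card_eq_finsetCard _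
  have := (key n).1
  unfold Ecnt Hcnt at this
  rw [e1, h1]
  exact_mod_cast this
end

section
/- For every n ≥ 1, the number of arches of Dyck paths with catastrophes of length n (paths whose only return to altitude 0 is at the final step) equals the number of arches of 1-horizontal Dyck paths of length n (1-horizontal Dyck paths whose only return to altitude 0 is at the final step). -/
/-- The arch condition for a path of length `n`: the altitude after step `i`
is strictly positive for all `1 ≤ i < n` (the only return to altitude `0` is
at the final step). -/
def IsArch (n : ℕ) (l : List ℤ) : Prop :=
  ∀ i : ℕ, 1 ≤ i → i < n → 0 < (l.take i).sum

/-!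
Both kinds of arch start with an up-step. An arch with catastrophes of length `n` is
`1 :: R ++ [-(1 + R.sum)]` with `R` any `±1` path of length `n - 2` that never goes below its
start: the last step, `-1` or a catastrophe, is forced by the altitude `1 + R.sum` reached.
A 1-horizontal arch is `1 :: q ++ [-1]` with `q` a 1-horizontal path from altitude `1` back to `1`
that never goes below `1`.

Flattening the unmatched up-steps of `R` (those after which the path never returns to the altitude
they start from, i.e. `minPrefixSum` of the rest is `0`) into horizontal steps gives such a `q`:
once they no longer climb, all of them sit at the starting altitude `1`, and the path ends there.
The inverse turns every horizontal step back into an up-step.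
-/

theorem mem_dyckJ {s : ℤ} : s ∈ dyckJ ↔ s = -1 ∨ s = 1 := by
  simp [dyckJ]

def minPrefixSum : List ℤ → ℤ
  | [] => 0
  | s :: t => min 0 (s + minPrefixSum t)

theorem le_minPrefixSum_iff {c : ℤ} {l : List ℤ} :
    c ≤ minPrefixSum l ↔ ∀ k, c ≤ (l.take k).sum := by
  induction l generalizing c with
  | nil => simp [minPrefixSum]
  | cons s t ih =>
    rw [← Nat.and_forall_add_one]
    simp only [minPrefixSum, le_min_iff, List.take_zero, List.sum_nil, List.take_succ_cons,
      List.sum_cons, ← sub_le_iff_le_add', ih]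

theorem minPrefixSum_nonpos (l : List ℤ) : minPrefixSum l ≤ 0 := by
  cases l <;> simp [minPrefixSum]

theorem minPrefixSum_le_sum (l : List ℤ) : minPrefixSum l ≤ l.sum := by
  simpa using (le_minPrefixSum_iff (l := l)).1 le_rfl l.length

theorem minPrefixSum_eq_zero_iff {l : List ℤ} :
    minPrefixSum l = 0 ↔ ∀ k, 0 ≤ (l.take k).sum := by
  rw [← le_minPrefixSum_iff, le_antisymm_iff, and_iff_right (minPrefixSum_nonpos l)]

def flatToUp (s : ℤ) : ℤ := if s = 0 then 1 else s

@[simp] theorem flatToUp_zero : flatToUp 0 = 1 := rfl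

theorem flatToUp_of_ne_zero {s : ℤ} (hs : s ≠ 0) : flatToUp s = s := if_neg hs

def flattenUnmatched : List ℤ → List ℤ
  | [] => []
  | s :: t => (if s = 1 ∧ minPrefixSum t = 0 then 0 else s) :: flattenUnmatched t

theorem length_flattenUnmatched (R : List ℤ) : (flattenUnmatched R).length = R.length := by
  induction R with
  | nil => rfl
  | cons s t ih => simp [flattenUnmatched, ih]

section DyckSteps

variable {R : List ℤ}

theorem map_flatToUp_flattenUnmatched (hR : ∀ s ∈ R, s ∈ dyckJ) :
    (flattenUnmatched R).map flatToUp = R := by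
  induction R with
  | nil => rfl
  | cons s t ih =>
    simp only [List.forall_mem_cons] at hR
    have hs : s ≠ 0 := by rintro rfl; simp [mem_dyckJ] at hR
    simp only [flattenUnmatched]
    split_ifs with h <;> simp_all [flatToUp]

theorem minPrefixSum_flattenUnmatched (hR : ∀ s ∈ R, s ∈ dyckJ) :
    minPrefixSum (flattenUnmatched R) = minPrefixSum R := by
  induction R with
  | nil => rfl
  | cons s t ih =>
    simp only [List.forall_mem_cons] at hR
    simp only [flattenUnmatched, minPrefixSum, ih hR.2]
    split_ifs with h
    · simp [h.1, h.2]
    · rfl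

theorem sum_flattenUnmatched (hR : ∀ s ∈ R, s ∈ dyckJ) :
    (flattenUnmatched R).sum = minPrefixSum R := by
  induction R with
  | nil => rfl
  | cons s t ih =>
    simp only [List.forall_mem_cons] at hR
    have := minPrefixSum_nonpos t
    simp only [flattenUnmatched, minPrefixSum, List.sum_cons, ih hR.2]
    split_ifs with h
    · simp [h.1, h.2]
    · rcases mem_dyckJ.1 hR.1 with rfl | rfl <;> omega

theorem hValidFrom_flattenUnmatched (hR : ∀ s ∈ R, s ∈ dyckJ) :
    HValidFrom (1 - minPrefixSum R) (flattenUnmatched R) := by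
  induction R with
  | nil => trivial
  | cons s t ih =>
    simp only [List.forall_mem_cons] at hR
    have := minPrefixSum_nonpos t
    simp only [flattenUnmatched, minPrefixSum]
    refine ⟨?_, ?_⟩
    · split_ifs with h
      · simp [h.1, h.2]
      · rcases mem_dyckJ.1 hR.1 with rfl | rfl <;> omega
    · convert ih hR.2 using 1
      split_ifs with h
      · obtain ⟨rfl, h0⟩ := h; omega
      · rcases mem_dyckJ.1 hR.1 with rfl | rfl <;> omega

end DyckSteps

theorem HValidFrom.map_flatToUp_mem_dyckJ {h : ℤ} {q : List ℤ} (hq : HValidFrom h q) :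
    ∀ s ∈ q.map flatToUp, s ∈ dyckJ := by
  induction q generalizing h with
  | nil => simp
  | cons s t ih =>
    simp only [List.map_cons, List.forall_mem_cons]
    refine ⟨?_, ih hq.2⟩
    rcases hq.1 with rfl | ⟨rfl, -⟩ | ⟨rfl, -⟩ <;> simp [flatToUp, dyckJ]

theorem HValidFrom.flattenUnmatched_map_flatToUp {b : ℤ} {q : List ℤ} (hq : HValidFrom b q)
    (hmin : minPrefixSum q = q.sum) (hend : b + q.sum = 1) :
    flattenUnmatched (q.map flatToUp) = q := by
  induction q generalizing b with
  | nil => rfl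
  | cons s t ih =>
    obtain ⟨hstep, ht⟩ := hq
    have := minPrefixSum_le_sum t
    simp only [minPrefixSum, List.sum_cons] at hmin hend
    have hmt : minPrefixSum t = t.sum := by omega
    have ih := ih ht hmt (by omega)
    have hmap : minPrefixSum (t.map flatToUp) = minPrefixSum t := by
      rw [← minPrefixSum_flattenUnmatched ht.map_flatToUp_mem_dyckJ, ih]
    simp only [List.map_cons, flattenUnmatched, ih, hmap, hmt]
    rcases hstep with rfl | ⟨rfl, -⟩ | ⟨rfl, rfl⟩
    · rw [flatToUp_of_ne_zero one_ne_zero, if_neg fun h => by omega]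
    · rw [flatToUp_of_ne_zero (by norm_num), if_neg (by norm_num)]
    · rw [flatToUp_zero, if_pos ⟨rfl, by omega⟩]

def IsDyckPrefix (R : List ℤ) : Prop :=
  (∀ s ∈ R, s ∈ dyckJ) ∧ minPrefixSum R = 0

def IsHExcursion (q : List ℤ) : Prop :=
  HValidFrom 1 q ∧ minPrefixSum q = 0 ∧ q.sum = 0

theorem IsDyckPrefix.isHExcursion_flattenUnmatched {R : List ℤ} (hR : IsDyckPrefix R) :
    IsHExcursion (flattenUnmatched R) :=
  ⟨by simpa [hR.2] using hValidFrom_flattenUnmatched hR.1,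
    (minPrefixSum_flattenUnmatched hR.1).trans hR.2, (sum_flattenUnmatched hR.1).trans hR.2⟩

theorem IsHExcursion.flattenUnmatched_map_flatToUp {q : List ℤ} (hq : IsHExcursion q) :
    flattenUnmatched (q.map flatToUp) = q :=
  hq.1.flattenUnmatched_map_flatToUp (hq.2.1.trans hq.2.2.symm) (by simp [hq.2.2])

theorem IsHExcursion.isDyckPrefix_map_flatToUp {q : List ℤ} (hq : IsHExcursion q) :
    IsDyckPrefix (q.map flatToUp) :=
  ⟨hq.1.map_flatToUp_mem_dyckJ, by
    rw [← minPrefixSum_flattenUnmatched hq.1.map_flatToUp_mem_dyckJ,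
      hq.flattenUnmatched_map_flatToUp, hq.2.1]⟩

def flattenUnmatchedEquiv (n : ℕ) :
    {R : List ℤ // R.length + 2 = n ∧ IsDyckPrefix R} ≃
      {q : List ℤ // q.length + 2 = n ∧ IsHExcursion q} where
  toFun R := ⟨flattenUnmatched R, by rw [length_flattenUnmatched, R.2.1],
    R.2.2.isHExcursion_flattenUnmatched⟩
  invFun q := ⟨q.1.map flatToUp, by rw [List.length_map, q.2.1], q.2.2.isDyckPrefix_map_flatToUp⟩
  left_inv R := Subtype.ext (map_flatToUp_flattenUnmatched R.2.2.1)
  right_inv q := Subtype.ext q.2.2.flattenUnmatched_map_flatToUp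

theorem isArch_cons_append_iff {a z : ℤ} {R : List ℤ} :
    IsArch (R.length + 2) (a :: R ++ [z]) ↔ ∀ k, 0 < a + (R.take k).sum := by
  have htake : ∀ k ≤ R.length, (a :: R ++ [z]).take (k + 1) = a :: R.take k := fun k hk => by
    rw [List.cons_append, List.take_succ_cons, List.take_append_of_le_length hk]
  constructor
  · intro h k
    rcases le_or_gt k R.length with hk | hk
    · have := h (k + 1) (by omega) (by omega)
      rwa [htake k hk, List.sum_cons] at this
    · have := h (R.length + 1) (by omega) (by omega)
      rw [htake _ le_rfl, List.sum_cons, List.take_length] at this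
      rwa [List.take_of_length_le hk.le]
  · intro h i hi hin
    obtain ⟨k, rfl⟩ := Nat.exists_eq_add_of_le' hi
    rw [htake k (by omega), List.sum_cons]
    exact h k

theorem catValidFrom_append {J : Finset ℤ} {h : ℤ} {xs ys : List ℤ} :
    CatValidFrom J h (xs ++ ys) ↔ CatValidFrom J h xs ∧ CatValidFrom J (h + xs.sum) ys := by
  induction xs generalizing h with
  | nil => simp [CatValidFrom]
  | cons s t ih => simp only [List.cons_append, CatValidFrom, ih, List.sum_cons, and_assoc, add_assoc]

theorem hValidFrom_append {h : ℤ} {xs ys : List ℤ} :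
    HValidFrom h (xs ++ ys) ↔ HValidFrom h xs ∧ HValidFrom (h + xs.sum) ys := by
  induction xs generalizing h with
  | nil => simp [HValidFrom]
  | cons s t ih => simp only [List.cons_append, HValidFrom, ih, List.sum_cons, and_assoc, add_assoc]

theorem catValidFrom_iff_of_pos {J : Finset ℤ} {h : ℤ} {R : List ℤ}
    (hpos : ∀ k, 0 < h + (R.take k).sum) : CatValidFrom J h R ↔ ∀ s ∈ R, s ∈ J := by
  induction R generalizing h with
  | nil => simp [CatValidFrom]
  | cons s t ih =>
    have hs : 0 < h + s := by simpa using hpos 1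
    have ht : ∀ k, 0 < h + s + (t.take k).sum := fun k => by
      simpa [add_assoc] using hpos (k + 1)
    simp only [CatValidFrom, List.forall_mem_cons, ih ht]
    constructor
    · rintro ⟨⟨hJ, -⟩ | ⟨rfl, -⟩, hrest⟩
      · exact ⟨hJ, hrest⟩
      · omega
    · rintro ⟨hJ, hrest⟩
      exact ⟨Or.inl ⟨hJ, hs.le⟩, hrest⟩

theorem catValidFrom_dyckJ_singleton_neg {h : ℤ} (hh : 0 < h) : CatValidFrom dyckJ h [-h] := by
  refine ⟨?_, trivial⟩
  rcases eq_or_lt_of_le (show 1 ≤ h from hh) with rfl | hh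
  · exact Or.inl ⟨mem_dyckJ.2 (Or.inl rfl), by norm_num⟩
  · exact Or.inr ⟨rfl, by omega, fun hJ => by rw [mem_dyckJ] at hJ; omega⟩

theorem exists_eq_append_of_cons_sum_eq_zero {a : ℤ} {t : List ℤ} (ha : a ≠ 0)
    (h : (a :: t).sum = 0) : ∃ R, t = R ++ [-(a + R.sum)] := by
  rcases t.eq_nil_or_concat' with rfl | ⟨R, z, rfl⟩
  · exact absurd (by simpa using h) ha
  · rw [List.sum_cons, List.sum_append, List.sum_singleton] at h
    obtain rfl : z = -(a + R.sum) := by omega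
    exact ⟨R, rfl⟩

theorem dyckCat_isArch_iff {n : ℕ} (hn : 1 ≤ n) {l : List ℤ} :
    DyckCat n l ∧ IsArch n l ↔
      ∃ R, (R.length + 2 = n ∧ IsDyckPrefix R) ∧ 1 :: R ++ [-(1 + R.sum)] = l := by
  constructor
  · rintro ⟨⟨hlen, hv, hsum⟩, harch⟩
    obtain _ | ⟨s, t⟩ := l
    · subst hlen; simp at hn
    obtain rfl : s = 1 := by
      rcases hv.1 with ⟨hJ, hs⟩ | ⟨-, h0, -⟩
      · rw [mem_dyckJ] at hJ; omega
      · omega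
    obtain ⟨R, rfl⟩ := exists_eq_append_of_cons_sum_eq_zero one_ne_zero hsum
    obtain rfl : R.length + 2 = n := by simpa using hlen
    rw [← List.cons_append, isArch_cons_append_iff] at harch
    have hR : CatValidFrom dyckJ 1 R := (catValidFrom_append.1 hv.2).1
    exact ⟨R, ⟨rfl, (catValidFrom_iff_of_pos harch).1 hR,
      minPrefixSum_eq_zero_iff.2 fun k => by linarith [harch k]⟩, rfl⟩
  · rintro ⟨R, ⟨rfl, hJ, hmin⟩, rfl⟩
    have hpos : ∀ k, 0 < 1 + (R.take k).sum := fun k => by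
      linarith [minPrefixSum_eq_zero_iff.1 hmin k]
    refine ⟨⟨by simp, ⟨Or.inl ⟨mem_dyckJ.2 (Or.inr rfl), zero_le_one⟩, ?_⟩, by simp⟩,
      isArch_cons_append_iff.2 hpos⟩
    rw [zero_add, List.append_eq, catValidFrom_append]
    exact ⟨(catValidFrom_iff_of_pos hpos).2 hJ,
      catValidFrom_dyckJ_singleton_neg (by simpa using hpos R.length)⟩

theorem hDyck_isArch_iff {n : ℕ} (hn : 1 ≤ n) {l : List ℤ} :
    HDyck n l ∧ IsArch n l ↔ ∃ q, (q.length + 2 = n ∧ IsHExcursion q) ∧ 1 :: q ++ [-1] = l := by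
  constructor
  · rintro ⟨⟨hlen, hv, hsum⟩, harch⟩
    obtain _ | ⟨s, t⟩ := l
    · subst hlen; simp at hn
    obtain rfl : s = 1 := by rcases hv.1 with h | ⟨-, h⟩ | ⟨-, h⟩ <;> omega
    obtain ⟨q, rfl⟩ := exists_eq_append_of_cons_sum_eq_zero one_ne_zero hsum
    obtain rfl : q.length + 2 = n := by simpa using hlen
    rw [← List.cons_append, isArch_cons_append_iff] at harch
    obtain ⟨hq, hlast⟩ := hValidFrom_append.1 hv.2
    have hend := harch q.length
    rw [List.take_length] at hend
    have hsum : q.sum = 0 := by rcases hlast.1 with h | ⟨h, -⟩ | ⟨h, -⟩ <;> omega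
    exact ⟨q, ⟨rfl, by simpa using hq, minPrefixSum_eq_zero_iff.2 fun k => by linarith [harch k],
      hsum⟩, by rw [hsum]; rfl⟩
  · rintro ⟨q, ⟨rfl, hq, hmin, hsum⟩, rfl⟩
    refine ⟨⟨by simp, ⟨Or.inl rfl, ?_⟩, by simp [hsum]⟩,
      isArch_cons_append_iff.2 fun k => by linarith [minPrefixSum_eq_zero_iff.1 hmin k]⟩
    rw [zero_add, List.append_eq, hValidFrom_append, hsum]
    exact ⟨hq, Or.inr (Or.inl ⟨rfl, le_rfl⟩), trivial⟩

theorem Nat.card_subtype_eq_of_injective {α β : Type*} {P : α → Prop} {Q : β → Prop}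
    {f : β → α} (hf : Function.Injective f) (h : ∀ a, P a ↔ ∃ b, Q b ∧ f b = a) :
    Nat.card {a // P a} = Nat.card {b // Q b} := by
  have himage : {a | P a} = f '' {b | Q b} := Set.ext h
  exact (congrArg (fun s : Set α => Nat.card s) himage).trans (Nat.card_image_of_injective hf _)

theorem cons_append_singleton_injective {α : Type*} (a : α) (g : List α → α) :
    Function.Injective fun R : List α => a :: R ++ [g R] := fun _ _ h =>
  (List.append_inj' (List.cons_injective h) rfl).1

/-- **Bijection on arches.** For `n ≥ 1`, the number of arches of Dyck paths
with catastrophes of length `n` equals the number of arches of 1-horizontal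
Dyck paths of length `n`. -/
theorem dyckCat_arch_eq_hDyck_arch (n : ℕ) (hn : 1 ≤ n) :
    Nat.card {l : List ℤ // DyckCat n l ∧ IsArch n l} =
      Nat.card {l : List ℤ // HDyck n l ∧ IsArch n l} := by
  rw [Nat.card_subtype_eq_of_injective (cons_append_singleton_injective 1 fun R => -(1 + R.sum))
      fun _ => dyckCat_isArch_iff hn,
    Nat.card_subtype_eq_of_injective (cons_append_singleton_injective 1 fun _ => -1)
      fun _ => hDyck_isArch_iff hn]
  exact Nat.card_congr (flattenUnmatchedEquiv n)
end

section
/- Let d_n be the number of excursions with catastrophes of length n that are either empty (n = 0) or whose final step is a catastrophe, and let q_m be the number of excursions with catastrophes of length m that contain exactly one catastrophe, occurring as the final step. Then d_0 = 1 and, for every n ≥ 1, d_n = Σ_{m=1}^{n} q_m · d_{n−m}. -/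
/-- The number of catastrophe steps of a path starting at altitude `h`. -/
def catNum (J : Finset ℤ) : ℤ → List ℤ → ℕ
  | _, [] => 0
  | h, s :: r => (if s = -h ∧ 0 < h ∧ -h ∉ J then 1 else 0) + catNum J (h + s) r

/-- The last step of `l` (a path starting at altitude `0`) is a catastrophe. -/
def EndsWithCat (J : Finset ℤ) (l : List ℤ) : Prop :=
  ∃ l' : List ℤ, l = l' ++ [-l'.sum] ∧ 0 < l'.sum ∧ -l'.sum ∉ J

/-- The number `d m` of excursions with catastrophes of length `m` that are
either empty or whose final step is a catastrophe. -/
noncomputable def dCount (J : Finset ℤ) (m : ℕ) : ℕ :=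
  Nat.card {l : List ℤ //
    l.length = m ∧ CatValidFrom J 0 l ∧ l.sum = 0 ∧ (l = [] ∨ EndsWithCat J l)}

/-- The number `q m` of excursions with catastrophes of length `m` containing
exactly one catastrophe, occurring as the final step. -/
noncomputable def qCount (J : Finset ℤ) (m : ℕ) : ℕ :=
  Nat.card {l : List ℤ //
    l.length = m ∧ CatValidFrom J 0 l ∧ l.sum = 0 ∧
      ∃ l' : List ℤ, l = l' ++ [-l'.sum] ∧ 0 < l'.sum ∧ -l'.sum ∉ J ∧
        catNum J 0 l' = 0}

namespace CP
variable (J : Finset ℤ)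

lemma valid_append (h : ℤ) (a b : List ℤ) :
    CatValidFrom J h (a ++ b) ↔ CatValidFrom J h a ∧ CatValidFrom J (h + a.sum) b := by
  induction a generalizing h with
  | nil => simp [CatValidFrom]
  | cons s r ih =>
    simp [CatValidFrom, ih, add_assoc, and_assoc]

lemma catNum_append (h : ℤ) (a b : List ℤ) :
    catNum J h (a ++ b) = catNum J h a + catNum J (h + a.sum) b := by
  induction a generalizing h with
  | nil => simp [catNum]
  | cons s r ih =>
    simp [catNum, ih, add_assoc, Nat.add_assoc]

lemma exists_split (h : ℤ) (l : List ℤ) (hv : CatValidFrom J h l) (hc : catNum J h l ≠ 0) :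
    ∃ a b : List ℤ, l = a ++ (-(h + a.sum)) :: b ∧ 0 < h + a.sum ∧ -(h + a.sum) ∉ J ∧
      catNum J h a = 0 := by
  induction l generalizing h with
  | nil => simp [catNum] at hc
  | cons s r ih =>
    by_cases hs : s = -h ∧ 0 < h ∧ -h ∉ J
    · exact ⟨[], r, by simp [hs.1], by simpa using hs.2.1, by simpa using hs.2.2, by simp [catNum]⟩
    · obtain ⟨hstep, hvr⟩ := hv
      have hc' : catNum J (h + s) r ≠ 0 := by
        simp [catNum, hs] at hc ⊢; exact hc
      obtain ⟨a, b, rfl, h1, h2, h3⟩ := ih (h + s) hvr hc'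
      exact ⟨s :: a, b, by simp [add_assoc], by simpa [add_assoc] using h1,
        by simpa [add_assoc] using h2, by simp [catNum, hs, h3]⟩

/-- `a` is a path counted by `qCount` (shape-wise). -/
def IsQ (a : List ℤ) : Prop :=
  ∃ a' : List ℤ, a = a' ++ [-a'.sum] ∧ 0 < a'.sum ∧ -a'.sum ∉ J ∧ catNum J 0 a' = 0

lemma IsQ.sum_eq_zero {a : List ℤ} (h : IsQ J a) : a.sum = 0 := by
  obtain ⟨a', rfl, -, -, -⟩ := h; simp

lemma IsQ.catNum_eq_one {a : List ℤ} (h : IsQ J a) : catNum J 0 a = 1 := by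
  obtain ⟨a', rfl, h1, h2, h3⟩ := h
  rw [catNum_append, h3]
  simp [catNum, h1, h2]

lemma split_unique_le {a₁ b₁ a₂ b₂ : List ℤ} (h1 : IsQ J a₁) (h2 : IsQ J a₂)
    (hlen : a₁.length ≤ a₂.length) (heq : a₁ ++ b₁ = a₂ ++ b₂) : a₁ = a₂ := by
  have hp1 : a₁ <+: a₂ ++ b₂ := heq ▸ List.prefix_append a₁ b₁
  have hp : a₁ <+: a₂ :=
    List.prefix_of_prefix_length_le hp1 (List.prefix_append a₂ b₂) hlen
  obtain ⟨c, rfl⟩ := hp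
  rcases eq_or_ne c [] with rfl | hc
  · simp
  · exfalso
    obtain ⟨a₂', ha₂, h1', h2', h3'⟩ := h2
    have hsplit : (a₁ ++ c.dropLast) ++ [c.getLast hc] = a₂' ++ [-a₂'.sum] := by
      rw [← ha₂, List.append_assoc, List.dropLast_append_getLast hc]
    have : a₁ ++ c.dropLast = a₂' :=
      (List.append_inj' hsplit rfl).1
    have hcat : catNum J 0 a₂' = catNum J 0 a₁ + catNum J (0 + a₁.sum) c.dropLast := by
      rw [← this, catNum_append]
    rw [h3', h1.catNum_eq_one J] at hcat
    omega

lemma split_unique {a₁ b₁ a₂ b₂ : List ℤ} (h1 : IsQ J a₁) (h2 : IsQ J a₂)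
    (heq : a₁ ++ b₁ = a₂ ++ b₂) : a₁ = a₂ ∧ b₁ = b₂ := by
  have ha : a₁ = a₂ := by
    rcases le_total a₁.length a₂.length with h | h
    · exact split_unique_le J h1 h2 h heq
    · exact (split_unique_le J h2 h1 h heq.symm).symm
  subst ha
  exact ⟨rfl, List.append_cancel_left heq⟩

lemma finite_valid (m : ℕ) : ∀ h : ℤ, {l : List ℤ | l.length = m ∧ CatValidFrom J h l}.Finite := by
  induction m with
  | zero =>
    intro h
    apply Set.Finite.subset (Set.finite_singleton ([] : List ℤ))
    rintro l ⟨hl, -⟩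
    simp [List.length_eq_zero_iff.mp hl]
  | succ m ih =>
    intro h
    apply Set.Finite.subset
      (Set.Finite.biUnion (Set.finite_coe_iff.mp (by infer_instance :
          Finite ((insert (-h) J : Finset ℤ) : Set ℤ)))
        (fun s _ => (ih (h + s)).image (List.cons s)))
    rintro l ⟨hl, hv⟩
    match l with
    | [] => simp at hl
    | s :: r =>
      obtain ⟨hstep, hvr⟩ := hv
      have hs : s ∈ (insert (-h) J : Finset ℤ) := by
        rcases hstep with ⟨hs, -⟩ | ⟨rfl, -⟩
        · simp [hs]
        · simp
      exact Set.mem_biUnion hs ⟨r, ⟨by simpa using hl, hvr⟩, rfl⟩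

instance finD (m : ℕ) : Finite {l : List ℤ //
    l.length = m ∧ CatValidFrom J 0 l ∧ l.sum = 0 ∧ (l = [] ∨ EndsWithCat J l)} :=
  Set.Finite.to_subtype ((finite_valid J m 0).subset (fun l hl => ⟨hl.1, hl.2.1⟩))

instance finQ (m : ℕ) : Finite {l : List ℤ //
    l.length = m ∧ CatValidFrom J 0 l ∧ l.sum = 0 ∧
      ∃ l' : List ℤ, l = l' ++ [-l'.sum] ∧ 0 < l'.sum ∧ -l'.sum ∉ J ∧ catNum J 0 l' = 0} :=
  Set.Finite.to_subtype ((finite_valid J m 0).subset (fun l hl => ⟨hl.1, hl.2.1⟩))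

end CP

/-- **Sequence decomposition of excursions ending with a catastrophe:**
`d 0 = 1` and, for `n ≥ 1`, `d n = ∑_{m=1}^{n} q m · d (n-m)`. -/

theorem dCount_recurrence (J : Finset ℤ) (hJ : J.Nonempty) :
    dCount J 0 = 1 ∧
      ∀ n : ℕ, 1 ≤ n →
        dCount J n = ∑ m ∈ Finset.Icc 1 n, qCount J m * dCount J (n - m) := by
  constructor
  · haveI : Unique {l : List ℤ //
        l.length = 0 ∧ CatValidFrom J 0 l ∧ l.sum = 0 ∧ (l = [] ∨ EndsWithCat J l)} :=
      { default := ⟨[], rfl, trivial, rfl, Or.inl rfl⟩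
        uniq := fun x => Subtype.ext (List.length_eq_zero_iff.mp x.2.1) }
    exact Nat.card_unique
  · intro n hn
    classical
    set Q : ℕ → Type := fun m => {l : List ℤ //
      l.length = m ∧ CatValidFrom J 0 l ∧ l.sum = 0 ∧
        ∃ l' : List ℤ, l = l' ++ [-l'.sum] ∧ 0 < l'.sum ∧ -l'.sum ∉ J ∧
          catNum J 0 l' = 0} with hQ
    set D : ℕ → Type := fun m => {l : List ℤ //
      l.length = m ∧ CatValidFrom J 0 l ∧ l.sum = 0 ∧ (l = [] ∨ EndsWithCat J l)} with hD
    -- the gluing map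
    have key : Nat.card ((m : (Finset.Icc 1 n : Finset ℕ)) × (Q m × D (n - m)))
        = Nat.card (D n) := by
      apply Nat.card_eq_of_bijective
        (fun x => ⟨x.2.1.1 ++ x.2.2.1, by
          obtain ⟨⟨m, hm⟩, ⟨a, hla, hva, hsa, a', ha', hsa', hJa', hca'⟩,
            ⟨b, hlb, hvb, hsb, hb⟩⟩ := x
          simp only [Finset.mem_Icc] at hm
          show (a ++ b).length = n ∧ CatValidFrom J 0 (a ++ b) ∧ (a ++ b).sum = 0 ∧
            ((a ++ b) = [] ∨ EndsWithCat J (a ++ b))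
          simp only at hla hlb
          refine ⟨?_, ?_, ?_, ?_⟩
          · simp only [List.length_append, hla, hlb]; omega
          · rw [CP.valid_append]
            exact ⟨hva, by rwa [hsa, add_zero]⟩
          · simp [hsa, hsb]
          · right
            rcases hb with rfl | ⟨b', rfl, hb1, hb2⟩
            · exact ⟨a', by simpa using ha', hsa', hJa'⟩
            · refine ⟨a ++ b', ?_, ?_, ?_⟩
              · rw [List.append_assoc]
                congr 2
                simp [hsa]
              · simpa [hsa] using hb1
              · simpa [hsa] using hb2⟩)
      constructor
      · rintro ⟨⟨m₁, hm₁⟩, ⟨a₁, ha₁⟩, ⟨b₁, hb₁⟩⟩ ⟨⟨m₂, hm₂⟩, ⟨a₂, ha₂⟩, ⟨b₂, hb₂⟩⟩ hf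
        have hf : a₁ ++ b₁ = a₂ ++ b₂ := congrArg Subtype.val hf
        have hq₁ : CP.IsQ J a₁ := ha₁.2.2.2
        have hq₂ : CP.IsQ J a₂ := ha₂.2.2.2
        obtain ⟨haa, hbb⟩ := CP.split_unique J hq₁ hq₂ hf
        have hmm : m₁ = m₂ := by
          have e1 : a₁.length = m₁ := ha₁.1
          have e2 : a₂.length = m₂ := ha₂.1
          rw [← e1, ← e2, haa]
        subst hmm; subst haa; subst hbb
        rfl
      · rintro ⟨l, hl, hv, hs, hend⟩
        have hlne : l ≠ [] := by
          intro h; rw [h] at hl; simp at hl; omega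
        have hend' : EndsWithCat J l := by
          rcases hend with rfl | h
          · exact absurd rfl hlne
          · exact h
        have hcat : catNum J 0 l ≠ 0 := by
          obtain ⟨l', rfl, h1, h2⟩ := hend'
          rw [CP.catNum_append]
          have : catNum J (0 + l'.sum) [-l'.sum] = 1 := by
            simp [catNum, h1, h2]
          omega
        obtain ⟨a', b, hsplit, h1, h2, h3⟩ := CP.exists_split J 0 l hv hcat
        rw [zero_add] at h1 h2
        have hsplit' : l = (a' ++ [-a'.sum]) ++ b := by
          rw [hsplit, List.append_assoc]
          simp
        set a : List ℤ := a' ++ [-a'.sum] with ha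
        have hsa : a.sum = 0 := by simp [ha]
        have hlsum : a'.length + 1 + b.length = n := by
          rw [← hl, hsplit']
          simp [ha]
          omega
        have hva : CatValidFrom J 0 a ∧ CatValidFrom J 0 b := by
          rw [hsplit', CP.valid_append] at hv
          rwa [hsa, add_zero] at hv
        have hsb : b.sum = 0 := by
          rw [hsplit'] at hs
          simp [hsa] at hs
          simpa [ha] using hs
        have hmIcc : a'.length + 1 ∈ Finset.Icc 1 n := by
          simp only [Finset.mem_Icc]; omega
        refine ⟨⟨⟨a'.length + 1, hmIcc⟩,
          ⟨a, by simp [ha], hva.1, hsa, a', rfl, h1, h2, h3⟩,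
          ⟨b, by show b.length = n - (a'.length + 1); omega, hva.2, hsb, ?_⟩⟩, ?_⟩
        · rcases eq_or_ne b [] with rfl | hbne
          · exact Or.inl rfl
          · right
            obtain ⟨l', hl', hp1, hp2⟩ := hend'
            have hglast : (a ++ b.dropLast) ++ [b.getLast hbne] = l' ++ [-l'.sum] := by
              rw [← hl', hsplit', List.append_assoc, List.dropLast_append_getLast hbne]
            have heq1 : a ++ b.dropLast = l' := (List.append_inj' hglast rfl).1
            have heq2 : b.getLast hbne = -l'.sum := by
              have := (List.append_inj' hglast rfl).2
              simpa using this
            have hsum' : l'.sum = b.dropLast.sum := by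
              rw [← heq1]; simp [hsa]
            refine ⟨b.dropLast, ?_, ?_, ?_⟩
            · conv_lhs => rw [← List.dropLast_append_getLast hbne]
              rw [heq2, hsum']
            · rwa [hsum'] at hp1
            · rwa [hsum'] at hp2
        · apply Subtype.ext
          exact hsplit'.symm
    -- now count the sigma type
    rw [show dCount J n = Nat.card (D n) from rfl, ← key]
    letI : ∀ m : (Finset.Icc 1 n : Finset ℕ), Fintype (Q m × D (n - m)) := fun m => by
      haveI := CP.finQ J (m : ℕ)
      haveI := CP.finD J (n - (m : ℕ))
      exact Fintype.ofFinite _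
    rw [Nat.card_eq_fintype_card, Fintype.card_sigma,
      ← Finset.sum_coe_sort (Finset.Icc 1 n) (fun m => qCount J m * dCount J (n - m))]
    congr 1
    funext m
    rw [← Nat.card_eq_fintype_card, Nat.card_prod]
    rfl
end

section
/- In the ring ℚ[[X]] of formal power series, let U be the unique power series with constant term 0 satisfying U = X·(1 + U²), and let E = Σ_{n≥0} e_n Xⁿ where e_n is the number of Dyck paths with catastrophes of length n. Then E·(X² + (X² + X − 1)·U) = (2X − 1)·U. -/
open PowerSeries

/-- The generating function `E = ∑ e_n Xⁿ` of Dyck paths with catastrophes. -/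
noncomputable def E : PowerSeries ℚ := PowerSeries.mk fun n => (eCount n : ℚ)

/-!
Splitting a path by its first step, the generating functions `F h` of paths with catastrophes from
altitude `h` down to `0` satisfy `F 0 = 1 + X F 1`, `F 1 = X (F 0 + F 2)` and
`F (h + 2) = X (F (h + 1) + F (h + 3) + F 0)`, and these equations determine the family
coefficient by coefficient. With the kernel `K = 1 - 2X - X² + X²U`, the series `1 - 2X` and
`X (1 - Uʰ)` (for `h ≥ 1`) satisfy the same equations with `K` in place of `1`; this is where
`U = X (1 + U²)` enters, as `U^(h+2) = X U^(h+1) (1 + U²)`. Hence `K E = K F 0 = 1 - 2X`, and the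
claimed identity is this one multiplied by `X² + (X² + X - 1) U`, modulo `U = X (1 + U²)`.
-/

section CatPaths

variable (J : Finset ℤ)

def catSteps (h : ℤ) : Finset ℤ :=
  J.filter (fun s => 0 ≤ h + s) ∪ if 0 < h ∧ -h ∉ J then {-h} else ∅

theorem mem_catSteps {h s : ℤ} :
    s ∈ catSteps J h ↔ (s ∈ J ∧ 0 ≤ h + s) ∨ (s = -h ∧ 0 < h ∧ -h ∉ J) := by
  rw [catSteps, Finset.mem_union, Finset.mem_filter]
  split_ifs with hh <;> simp [hh]

theorem catValidFrom_cons_iff {h s : ℤ} {r : List ℤ} :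
    CatValidFrom J h (s :: r) ↔ s ∈ catSteps J h ∧ CatValidFrom J (h + s) r := by
  rw [CatValidFrom, mem_catSteps]

/-- Paths with catastrophes of length `n` from altitude `h` down to altitude `0`. -/
def CatPath (h : ℤ) (n : ℕ) : Type :=
  {l : List ℤ // l.length = n ∧ CatValidFrom J h l ∧ h + l.sum = 0}

def catPathConsEquiv (h : ℤ) (n : ℕ) :
    (Σ s : catSteps J h, CatPath J (h + s) n) ≃ CatPath J h (n + 1) where
  toFun p :=
    ⟨p.1.1 :: p.2.1, by simp [p.2.2.1], (catValidFrom_cons_iff J).2 ⟨p.1.2, p.2.2.2.1⟩,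
      by simp only [List.sum_cons]; linarith [p.2.2.2.2]⟩
  invFun
    | ⟨[], hlen, _, _⟩ => absurd hlen (by simp)
    | ⟨s :: r, hlen, hv, hsum⟩ =>
      ⟨⟨s, ((catValidFrom_cons_iff J).1 hv).1⟩,
        ⟨r, by simpa using hlen, ((catValidFrom_cons_iff J).1 hv).2,
          by simp only [List.sum_cons] at hsum; linarith⟩⟩
  left_inv _ := rfl
  right_inv
    | ⟨[], hlen, _, _⟩ => absurd hlen (by simp)
    | ⟨_ :: _, _, _, _⟩ => rfl

theorem CatPath.val_eq_nil {h : ℤ} (l : CatPath J h 0) : l.1 = [] :=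
  List.length_eq_zero_iff.1 l.2.1

instance finite_catPath (h : ℤ) (n : ℕ) : Finite (CatPath J h n) := by
  induction n generalizing h with
  | zero =>
    have : Subsingleton (CatPath J h 0) :=
      ⟨fun l m => Subtype.ext <| by rw [l.val_eq_nil, m.val_eq_nil]⟩
    infer_instance
  | succ n ih => exact Finite.of_equiv _ (catPathConsEquiv J h n)

theorem card_catPath_zero (h : ℤ) : Nat.card (CatPath J h 0) = if h = 0 then 1 else 0 := by
  split_ifs with h0
  · subst h0
    exact Nat.card_eq_one_iff_exists.2
      ⟨⟨[], rfl, trivial, rfl⟩, fun l => Subtype.ext l.val_eq_nil⟩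
  · have : IsEmpty (CatPath J h 0) := ⟨fun l => h0 (by simpa [l.val_eq_nil] using l.2.2.2)⟩
    exact Nat.card_of_isEmpty

theorem card_catPath_succ (h : ℤ) (n : ℕ) :
    Nat.card (CatPath J h (n + 1)) = ∑ s ∈ catSteps J h, Nat.card (CatPath J (h + s) n) := by
  rw [← Nat.card_congr (catPathConsEquiv J h n), Nat.card_sigma,
    Finset.sum_coe_sort (catSteps J h) (fun s => Nat.card (CatPath J (h + s) n))]

end CatPaths

section Series

variable (R : Type*) [CommSemiring R] (J : Finset ℤ)

noncomputable def catPathSeries (h : ℤ) : R⟦X⟧ :=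
  mk fun n => (Nat.card (CatPath J h n) : R)

theorem catPathSeries_eq (h : ℤ) :
    catPathSeries R J h =
      (if h = 0 then 1 else 0) + X * ∑ s ∈ catSteps J h, catPathSeries R J (h + s) := by
  ext (_ | n)
  · simp [catPathSeries, card_catPath_zero, apply_ite (fun k : ℕ => (k : R))]
  · simp [catPathSeries, coeff_succ_X_mul, card_catPath_succ, apply_ite (coeff (n + 1))]

end Series

theorem catSteps_dyckJ_zero : catSteps dyckJ 0 = {1} := by
  ext s
  simp only [mem_catSteps, dyckJ, Finset.mem_insert, Finset.mem_singleton]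
  omega

theorem catSteps_dyckJ_one : catSteps dyckJ 1 = {-1, 1} := by
  ext s
  simp only [mem_catSteps, dyckJ, Finset.mem_insert, Finset.mem_singleton]
  omega

theorem catSteps_dyckJ_of_two_le {h : ℤ} (hh : 2 ≤ h) : catSteps dyckJ h = {-1, 1, -h} := by
  ext s
  simp only [mem_catSteps, dyckJ, Finset.mem_insert, Finset.mem_singleton]
  omega

/-- The first-step equations of Dyck paths with catastrophes, indexed by the starting altitude;
`a` takes the place of the empty path. -/
structure IsDyckCatSystem {R : Type*} [CommSemiring R] (a : R⟦X⟧) (G : ℕ → R⟦X⟧) :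
    Prop where
  zero : G 0 = a + X * G 1
  one : G 1 = X * (G 0 + G 2)
  add_two (h : ℕ) : G (h + 2) = X * (G (h + 1) + G (h + 3) + G 0)

namespace IsDyckCatSystem

variable {R : Type*} [CommSemiring R] {a : R⟦X⟧} {G G' : ℕ → R⟦X⟧}

theorem mul_left (hG : IsDyckCatSystem a G) (c : R⟦X⟧) :
    IsDyckCatSystem (c * a) (fun h => c * G h) where
  zero := by rw [hG.zero]; ring
  one := by rw [hG.one]; ring
  add_two h := by rw [hG.add_two h]; ring

theorem unique (hG : IsDyckCatSystem a G) (hG' : IsDyckCatSystem a G') : G = G' := by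
  suffices ∀ n h, coeff n (G h) = coeff n (G' h) from funext fun h => ext fun n => this n h
  intro n
  induction n with
  | zero =>
    rintro (_ | _ | h)
    · rw [hG.zero, hG'.zero]; simp
    · rw [hG.one, hG'.one]; simp
    · rw [hG.add_two, hG'.add_two]; simp
  | succ n ih =>
    rintro (_ | _ | h)
    · rw [hG.zero, hG'.zero]; simp [coeff_succ_X_mul, ih]
    · rw [hG.one, hG'.one]; simp [coeff_succ_X_mul, ih]
    · rw [hG.add_two, hG'.add_two]; simp [coeff_succ_X_mul, ih]

end IsDyckCatSystem

theorem isDyckCatSystem_catPathSeries (R : Type*) [CommSemiring R] :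
    IsDyckCatSystem 1 fun h : ℕ => catPathSeries R dyckJ h := by
  constructor
  · rw [Nat.cast_zero, catPathSeries_eq, catSteps_dyckJ_zero]; simp
  · rw [Nat.cast_one, catPathSeries_eq, catSteps_dyckJ_one, Finset.sum_pair (by norm_num)]
    norm_num
  · intro h
    have hne : (-1 : ℤ) ∉ ({1, -((h + 2 : ℕ) : ℤ)} : Finset ℤ) := by
      simp only [Finset.mem_insert, Finset.mem_singleton]; omega
    rw [catPathSeries_eq, catSteps_dyckJ_of_two_le (by omega), Finset.sum_insert hne,
      Finset.sum_pair (by omega)]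
    push_cast
    rw [if_neg (by omega), zero_add, ← add_assoc]
    congr 4 <;> ring

section Kernel

variable {R : Type*} [CommRing R]

noncomputable def dyckCatKernel (U : R⟦X⟧) : R⟦X⟧ := 1 - 2 * X - X ^ 2 + X ^ 2 * U

noncomputable def dyckCatNumerator (U : R⟦X⟧) : ℕ → R⟦X⟧
  | 0 => 1 - 2 * X
  | h + 1 => X * (1 - U ^ (h + 1))

theorem isDyckCatSystem_dyckCatNumerator {U : R⟦X⟧} (hU : U = X * (1 + U ^ 2)) :
    IsDyckCatSystem (dyckCatKernel U) (dyckCatNumerator U) where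
  zero := by simp only [dyckCatNumerator, dyckCatKernel]; ring
  one := by simp only [dyckCatNumerator]; linear_combination (-X : R⟦X⟧) * hU
  add_two h := by
    simp only [dyckCatNumerator]
    linear_combination (-X * U ^ (h + 1) : R⟦X⟧) * hU

theorem dyckCatKernel_mul_catPathSeries_zero {U : R⟦X⟧} (hU : U = X * (1 + U ^ 2)) :
    dyckCatKernel U * catPathSeries R dyckJ 0 = 1 - 2 * X := by
  have h := ((isDyckCatSystem_catPathSeries R).mul_left (dyckCatKernel U)).unique
    (by simpa using isDyckCatSystem_dyckCatNumerator hU)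
  exact congrFun h 0

theorem dyckCatKernel_ne_zero [Nontrivial R] (U : R⟦X⟧) : dyckCatKernel U ≠ 0 := fun h => by
  simpa [dyckCatKernel] using congrArg constantCoeff h

end Kernel

theorem E_eq_catPathSeries : E = catPathSeries ℚ dyckJ 0 := by
  ext n
  have hDyckCat (l : List ℤ) :
      DyckCat n l ↔ l.length = n ∧ CatValidFrom dyckJ 0 l ∧ 0 + l.sum = 0 := by
    rw [DyckCat, zero_add]
  simp only [E, catPathSeries, coeff_mk, eCount, CatPath, hDyckCat]

theorem E_mul_eq_general (U : PowerSeries ℚ) (hU : U = X * (1 + U ^ 2)) :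
    E * (X ^ 2 + (X ^ 2 + X - 1) * U) = (2 * X - 1) * U := by
  have hKE := dyckCatKernel_mul_catPathSeries_zero hU
  rw [← E_eq_catPathSeries] at hKE
  apply mul_left_cancel₀ (dyckCatKernel_ne_zero U)
  rw [dyckCatKernel] at hKE ⊢
  -- multiplied by the kernel, the claim is `(1 - 2X) X (X (1 + U²) - U) = 0`
  linear_combination (X ^ 2 + (X ^ 2 + X - 1) * U) * hKE + X * (2 * X - 1) * hU

/-- **Algebraic equation for Dyck paths with catastrophes.** If `U` is the
(unique) power series with constant term `0` satisfying `U = X·(1 + U²)`, then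
`E·(X² + (X² + X - 1)·U) = (2X - 1)·U`. -/
theorem E_mul_eq (U : PowerSeries ℚ) (hU0 : constantCoeff U = 0)
    (hU : U = X * (1 + U ^ 2)) :
    E * (X ^ 2 + (X ^ 2 + X - 1) * U) = (2 * X - 1) * U :=
  E_mul_eq_general U hU
end
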